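/- arXiv:2510.10834 — 6 statements merged into one kernel-verified Lean document; each statement's English description precedes it below -/
import Mathlib

section
/- For all n, ψ·T_n − T_{n+1} is a real number equal to 2·Re(c₂(ψ−α)αⁿ), where c₂ = α/((α−ψ)(α−β)) and α is one of the complex roots of X^3−X^2−X−1. -/
def trib : ℕ → ℕ
  | 0 => 0
  | 1 => 1
  | 2 => 1
  | n + 3 => trib (n + 2) + trib (n + 1) + trib n

theorem psi_trib_sub_next_real (ψ : ℝ) (α : ℂ)
    (hψ : ψ^3 - ψ^2 - ψ - 1 = 0)
    (hα : α^3 - α^2 - α - 1 = 0)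
    (hαim : α.im ≠ 0) :
    ∀ n : ℕ, ψ * (trib n : ℝ) - (trib (n + 1) : ℝ) =
      2 * ((α / ((α - (ψ:ℂ)) * (α - starRingEnd ℂ α)) * ((ψ:ℂ) - α) * α^n).re) := by
  set β := starRingEnd ℂ α with hβdef
  set P : ℂ := (ψ : ℂ) with hPdef
  have hPim : P.im = 0 := Complex.ofReal_im ψ
  have hβim : β.im = -α.im := Complex.conj_im α
  have hPα : P - α ≠ 0 := by
    intro h
    apply hαim
    have := congrArg Complex.im h
    simpa [hPim] using this.symm
  have hPβ : P - β ≠ 0 := by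
    intro h
    apply hαim
    have := congrArg Complex.im h
    simp [hPim, hβim] at this
    linarith
  have hαβ : α - β ≠ 0 := by
    intro h
    apply hαim
    have := congrArg Complex.im h
    simp [hβim] at this
    linarith
  have hψc : P^3 - P^2 - P - 1 = 0 := by
    rw [hPdef]; exact_mod_cast hψ
  have hβ3 : β^3 - β^2 - β - 1 = 0 := by
    have := congrArg (starRingEnd ℂ) hα
    simpa using this
  have E1 : P^2 + P*α + α^2 - P - α - 1 = 0 := by
    rcases mul_eq_zero.mp (show (P - α) * (P^2 + P*α + α^2 - P - α - 1) = 0 by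
      linear_combination hψc - hα) with h | h
    · exact absurd h hPα
    · exact h
  have E2 : P^2 + P*β + β^2 - P - β - 1 = 0 := by
    rcases mul_eq_zero.mp (show (P - β) * (P^2 + P*β + β^2 - P - β - 1) = 0 by
      linear_combination hψc - hβ3) with h | h
    · exact absurd h hPβ
    · exact h
  have E3 : α^2 + α*β + β^2 - α - β - 1 = 0 := by
    rcases mul_eq_zero.mp (show (α - β) * (α^2 + α*β + β^2 - α - β - 1) = 0 by
      linear_combination hα - hβ3) with h | h
    · exact absurd h hαβ
    · exact h
  have hs : α + β = 1 - P := by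
    rcases mul_eq_zero.mp (show (α - β) * (α + β - (1 - P)) = 0 by
      linear_combination E1 - E2) with h | h
    · exact absurd h hαβ
    · exact sub_eq_zero.mp h
  have key : ∀ n : ℕ, (P * (trib n : ℂ) - (trib (n+1) : ℂ)) * (α - β) = β^(n+1) - α^(n+1) := by
    intro n
    induction n using Nat.strong_induction_on with
    | _ n ih =>
      match n with
      | 0 => simp [trib]
      | 1 =>
        show (P * ((trib 1 : ℕ) : ℂ) - ((trib 2 : ℕ) : ℂ)) * (α - β) = β^2 - α^2
        simp only [trib]
        push_cast
        linear_combination (α - β) * hs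
      | 2 =>
        show (P * ((trib 2 : ℕ) : ℂ) - ((trib 3 : ℕ) : ℂ)) * (α - β) = β^3 - α^3
        simp only [trib]
        push_cast
        linear_combination (α - β) * E3 + (α - β) * hs
      | (m+3) =>
        have h1 := ih (m+2) (by omega)
        have h2 := ih (m+1) (by omega)
        have h3 := ih m (by omega)
        have ht : (trib (m+4) : ℂ) = (trib (m+3) : ℂ) + (trib (m+2) : ℂ) + (trib (m+1) : ℂ) := by
          rw [show m+4 = (m+1)+3 from rfl]
          push_cast [trib]
          ring
        have ht2 : (trib (m+2+1) : ℂ) = (trib (m+2) : ℂ) + (trib (m+1) : ℂ) + (trib m : ℂ) := by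
          show (trib (m+3) : ℂ) = _
          push_cast [trib]; ring
        norm_num at h1 h2 ht2
        rw [ht, ht2]
        rw [ht2] at h1
        linear_combination h1 + h2 + h3 + (α^(m+1)) * hα - (β^(m+1)) * hβ3
  intro n
  have hk := key n
  have hz : α / ((α - P) * (α - β)) * (P - α) * α^n
      + starRingEnd ℂ (α / ((α - P) * (α - β)) * (P - α) * α^n)
      = ((ψ * (trib n : ℝ) - (trib (n+1) : ℝ) : ℝ) : ℂ) := by
    have hconj : starRingEnd ℂ (α / ((α - P) * (α - β)) * (P - α) * α^n)
        = β / ((β - P) * (β - α)) * (P - β) * β^n := by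
      simp [map_mul, map_div₀, map_pow, map_sub, Complex.conj_conj, hPdef, hβdef]
    rw [hconj]
    have hβα : β - α ≠ 0 := by
      intro h; apply hαβ; rw [← neg_sub] at h; simpa using neg_eq_zero.mp h
    have hαP : α - P ≠ 0 := fun h => hPα (by rw [← neg_sub] at h; simpa using neg_eq_zero.mp h)
    have hβP : β - P ≠ 0 := fun h => hPβ (by rw [← neg_sub] at h; simpa using neg_eq_zero.mp h)
    have hcast : ((ψ * (trib n : ℝ) - (trib (n+1) : ℝ) : ℝ) : ℂ)
        = P * (trib n : ℂ) - (trib (n+1) : ℂ) := by push_cast [hPdef]; ring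
    have e1 : α / ((α - P) * (α - β)) * (P - α) * α^n = -α^(n+1)/(α - β) := by
      field_simp; ring
    have e2 : β / ((β - P) * (β - α)) * (P - β) * β^n = β^(n+1)/(α - β) := by
      rw [div_mul_eq_mul_div, div_mul_eq_mul_div,
        div_eq_div_iff (mul_ne_zero hβP hβα) hαβ]
      ring
    rw [hcast, e1, e2]
    rw [← add_div, div_eq_iff hαβ]
    linear_combination -hk
  have := congrArg Complex.re hz
  simp only [Complex.add_re, Complex.conj_re, Complex.ofReal_re] at this
  linarith
end

section
/- |ψ·T_n − T_{n+1}| tends to 0 as n → ∞; i.e., T_{n+1}/T_n → ψ and in fact the difference ψT_n − T_{n+1} vanishes in the limit. -/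
theorem abs_psi_trib_sub_next_tendsto_zero (ψ : ℝ)
    (hψ : ψ^3 - ψ^2 - ψ - 1 = 0) :
    Filter.Tendsto (fun n : ℕ => |ψ * (trib n : ℝ) - (trib (n + 1) : ℝ)|)
      Filter.atTop (nhds 0) := by
  have h53 : 5/3 < ψ := by nlinarith [sq_nonneg (ψ + 1/3), sq_nonneg (ψ - 5/3)]
  have h2 : ψ < 2 := by nlinarith [sq_nonneg (ψ - 2), sq_nonneg (ψ + 1)]
  set q : ℝ := ψ^2 - ψ - 1 with hqdef
  set s : ℝ := 1 - ψ with hsdef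
  have hq4 : s^2 < 4*q := by simp only [hqdef, hsdef]; nlinarith
  have hq0 : 0 < q := by nlinarith [sq_nonneg s]
  have hq1 : q < 1 := by simp only [hqdef]; nlinarith
  set e : ℕ → ℝ := fun n => ψ * trib n - trib (n+1) with hedef
  have htr : ∀ m : ℕ, (trib (m+3) : ℝ) = trib (m+2) + trib (m+1) + trib m := by
    intro m; simp [trib]
  have hrec : ∀ n, e (n+2) = s * e (n+1) - q * e n := by
    intro n
    induction n with
    | zero =>
      simp only [hedef]
      norm_num [show trib 0 = 0 from rfl, show trib 1 = 1 from rfl,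
        show trib 2 = 1 from rfl, show trib 3 = 2 from rfl]
      ring
    | succ n ih =>
      simp only [hedef] at ih ⊢
      rw [show n+1+2 = n+3 from rfl, show n+1+1 = n+2 from rfl,
        show n+3+1 = (n+1)+3 from rfl, htr (n+1), htr n] at *
      linear_combination ψ * ih - (ψ * (trib n : ℝ) - (trib (n+1) : ℝ)) * hψ
  set V : ℕ → ℝ := fun n => (e (n+1))^2 - s * e (n+1) * e n + q * (e n)^2 with hVdef
  have hV : ∀ n, V n = q^n * V 0 := by
    intro n
    induction n with
    | zero => simp
    | succ n ih =>
      have : V (n+1) = q * V n := by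
        simp only [hVdef]; rw [hrec n]; ring
      rw [this, ih]; ring
  have hC : ∀ n, (e (n+1))^2 ≤ (4*q*(V 0)/(4*q - s^2)) * q^n := by
    intro n
    rw [div_mul_eq_mul_div, le_div_iff₀ (by linarith)]
    have h1 : (4*q - s^2) * (e (n+1))^2 ≤ 4*q*(V n) := by
      have := sq_nonneg (2*q*(e n) - s*(e (n+1)))
      simp only [hVdef]
      nlinarith
    calc (e (n+1))^2 * (4*q - s^2) ≤ 4*q*(V n) := by linarith
      _ = 4*q*(V 0)*q^n := by rw [hV n]; ring
  have hsq : Filter.Tendsto (fun n => (e (n+1))^2) Filter.atTop (nhds 0) := by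
    apply squeeze_zero (fun n => sq_nonneg _) hC
    simpa using (tendsto_pow_atTop_nhds_zero_of_lt_one hq0.le hq1).const_mul
      (4*q*(V 0)/(4*q - s^2))
  have habs : Filter.Tendsto (fun n => |e (n+1)|) Filter.atTop (nhds 0) := by
    have := (Real.continuous_sqrt.tendsto 0).comp hsq
    simpa [Function.comp_def, Real.sqrt_sq_eq_abs] using this
  have := (Filter.tendsto_add_atTop_iff_nat (f := fun n => |e n|) 1).mp habs
  simpa [hedef] using this
end

section
/- For all n ≥ 5, |ψ·T_n − T_{n+1}| < 2 − ψ, where ψ = 1.839… is the Tribonacci constant. -/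
set_option maxHeartbeats 1000000 in
theorem abs_psi_trib_sub_next_lt (ψ : ℝ)
    (hψ : ψ^3 - ψ^2 - ψ - 1 = 0) :
    ∀ n : ℕ, 5 ≤ n → |ψ * (trib n : ℝ) - (trib (n + 1) : ℝ)| < 2 - ψ := by
  have hlb : (11:ℝ)/6 < ψ := by
    nlinarith [sq_nonneg (ψ - 11/6), sq_nonneg (ψ + 1), sq_nonneg ψ, sq_nonneg (ψ+1/3)]
  have hub : ψ < 46/25 := by
    nlinarith [sq_nonneg (ψ - 46/25), sq_nonneg (ψ + 1), sq_nonneg ψ, sq_nonneg (ψ+1/3)]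
  have hψ0 : (0:ℝ) < ψ := by linarith
  set E : ℕ → ℝ := fun n => ψ * (trib n : ℝ) - (trib (n+1) : ℝ) with hE
  have hE3 : ∀ n, E (n+3) = E (n+2) + E (n+1) + E n := by
    intro n
    have h1 : trib (n+3) = trib (n+2) + trib (n+1) + trib n := rfl
    have h2 : trib (n+4) = trib (n+3) + trib (n+2) + trib (n+1) := rfl
    simp only [hE, h1, h2]
    push_cast
    ring
  have hE2 : ∀ n, ψ * E (n+2) = (ψ - ψ^2) * E (n+1) - E n := by
    intro n
    induction n with
    | zero =>
      simp only [hE]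
      norm_num [trib]
      linear_combination hψ
    | succ m ih =>
      have h4 : m + 1 + 2 = m + 3 := rfl
      rw [h4, hE3 m]
      linear_combination ψ * ih - E (m+1) * hψ
  -- invariant quadratic form
  set q : ℕ → ℝ := fun n => ψ * E (n+1)^2 + ψ*(ψ-1) * E n * E (n+1) + E n ^2 with hq
  have hqval : ∀ n, q n = (ψ⁻¹)^n := by
    intro n
    induction n with
    | zero =>
      simp only [hq, hE]
      norm_num [trib]
      ring
    | succ m ih =>
      have key : ψ * q (m+1) = q m := by
        simp only [hq]
        linear_combination (ψ * E (m+2) - E m) * hE2 m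
      have : q (m+1) = ψ⁻¹ * q m := by
        field_simp at key ⊢
        linarith [key]
      rw [this, ih, pow_succ]
      ring
  have main : ∀ n, 8 ≤ n → E n ^ 2 < (2 - ψ)^2 := by
    intro n hn
    have hq_ge : (1 - ψ*(ψ-1)^2/4) * E n ^2 ≤ q n := by
      simp only [hq]
      nlinarith [sq_nonneg (E (n+1) + (ψ-1)/2 * E n), hψ0]
    have hc : (67:ℝ)/100 ≤ 1 - ψ*(ψ-1)^2/4 := by
      have h1 : (ψ-1)^2 ≤ (21/25)^2 := by nlinarith
      nlinarith [h1, hψ0]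
    have hinv : ψ⁻¹ ≤ 6/11 := by
      rw [inv_le_comm₀ (by linarith) (by norm_num)]
      norm_num
      linarith
    have hinv0 : (0:ℝ) ≤ ψ⁻¹ := by positivity
    have hq_le : q n ≤ (6/11:ℝ)^8 := by
      rw [hqval n]
      calc (ψ⁻¹)^n ≤ (ψ⁻¹)^8 := by
            apply pow_le_pow_of_le_one hinv0 (by linarith) hn
        _ ≤ (6/11:ℝ)^8 := by
            apply pow_le_pow_left₀ hinv0 hinv
    have h1 : (67:ℝ)/100 * E n ^2 ≤ q n := by
      nlinarith [sq_nonneg (E n), hc, hq_ge]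
    have h2 : E n ^2 ≤ (6/11:ℝ)^8 * 100/67 := by linarith
    have h3 : (16:ℝ)/625 < (2 - ψ)^2 := by nlinarith [sq_nonneg (ψ - 46/25), hub]
    have h4 : (6/11:ℝ)^8 * 100/67 < 16/625 := by norm_num
    exact h2.trans_lt (h4.trans h3)
  intro n hn
  by_cases h8 : 8 ≤ n
  · have h := main n h8
    have h2ψ : 0 < 2 - ψ := by linarith
    show |E n| < 2 - ψ
    rw [abs_lt]
    constructor <;> nlinarith [h, sq_nonneg (E n + (2-ψ)), sq_nonneg (E n - (2-ψ))]
  · have t5 : ((trib 5 : ℕ):ℝ) = 7 := by norm_num [trib]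
    have t6 : ((trib 6 : ℕ):ℝ) = 13 := by norm_num [trib]
    have t7 : ((trib 7 : ℕ):ℝ) = 24 := by norm_num [trib]
    have t8 : ((trib 8 : ℕ):ℝ) = 44 := by norm_num [trib]
    interval_cases n
    · rw [show (5:ℕ)+1 = 6 from rfl, t5, t6, abs_lt]
      constructor <;> linarith
    · rw [show (6:ℕ)+1 = 7 from rfl, t6, t7, abs_lt]
      constructor <;> linarith
    · rw [show (7:ℕ)+1 = 8 from rfl, t7, t8, abs_lt]
      constructor <;> linarith
end

section
/- The number α/|α| is not a root of unity, where α is a complex root of X^3 − X^2 − X − 1. -/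
private def tseq : ℕ → ℤ × ℤ × ℤ
  | 0 => (0, 0, 1)
  | n+1 => ((tseq n).1 + (tseq n).2.1, (tseq n).1 + (tseq n).2.2, (tseq n).1)

private lemma pow_rep (α : ℂ) (h3 : α^3 = α^2 + α + 1) (n : ℕ) :
    α^n = ((tseq n).1 : ℂ)*α^2 + ((tseq n).2.1 : ℂ)*α + ((tseq n).2.2 : ℂ) := by
  induction n with
  | zero => simp [tseq]
  | succ n ih =>
    rw [show tseq (n+1) = ((tseq n).1 + (tseq n).2.1, (tseq n).1 + (tseq n).2.2, (tseq n).1) from rfl]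
    push_cast
    linear_combination α * ih + ((tseq n).1 : ℂ) * h3

private lemma no_rat (r : ℚ) (h : r^3 - 2*r^2 + 2 = 0) (h1 : -1 < r) (h2 : r < -2/3) : False := by
  have hden : (r.den : ℚ) ≠ 0 := by simp [r.den_nz]
  have hr : r = (r.num : ℚ) / (r.den : ℚ) := (Rat.num_div_den r).symm
  have hz : (r.num : ℚ)^3 - 2*(r.num:ℚ)^2*(r.den:ℚ) + 2*(r.den:ℚ)^3 = 0 := by
    rw [hr] at h
    field_simp at h
    have hfac : (r.den:ℚ)^2 * ((r.num:ℚ)^3 - 2*(r.num:ℚ)^2*(r.den:ℚ) + 2*(r.den:ℚ)^3) = 0 := by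
      linear_combination (r.den:ℚ)^2 * h
    rcases mul_eq_zero.mp hfac with h' | h'
    · exact absurd h' (pow_ne_zero 2 hden)
    · exact h'
  have hzZ : r.num^3 - 2*r.num^2*(r.den:ℤ) + 2*(r.den:ℤ)^3 = 0 := by exact_mod_cast hz
  have hdvd : (r.den:ℤ) ∣ r.num^3 := ⟨2*r.num^2 - 2*(r.den:ℤ)^2, by linarith [hzZ]⟩
  have hdvdn : r.den ∣ r.num.natAbs^3 := by
    have := Int.natAbs_dvd_natAbs.mpr hdvd
    simpa [Int.natAbs_pow] using this
  have hco : r.den.Coprime (r.num.natAbs^3) := (r.reduced.symm).pow_right 3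
  have hden1 : r.den = 1 := Nat.eq_one_of_dvd_coprimes hco (dvd_refl _) hdvdn
  have hint : r = (r.num : ℚ) := by rw [hr, hden1]; simp
  rw [hint] at h1 h2
  have e1 : -1 < r.num := by exact_mod_cast h1
  have e2 : 3 * r.num < -2 := by
    have : (3 * r.num : ℚ) < -2 := by linarith
    exact_mod_cast this
  omega

theorem not_root_of_unity (α : ℂ)
    (hα : α^3 - α^2 - α - 1 = 0) (hαim : α.im ≠ 0) :
    ¬ ∃ n : ℕ, 0 < n ∧ (α / (‖α‖ : ℂ))^n = 1 := by
  rintro ⟨n, hn, hroot⟩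
  have hαne : α ≠ 0 := fun h => hαim (by simp [h])
  set x := α.re with hx'
  set y := α.im with hy'
  have hre : x^3 - 3*x*y^2 - (x^2 - y^2) - x - 1 = 0 := by
    have := congrArg Complex.re hα
    simp [pow_succ, Complex.mul_re, Complex.mul_im] at this
    linarith [this]
  have him : 3*x^2*y - y^3 - 2*x*y - y = 0 := by
    have := congrArg Complex.im hα
    simp [pow_succ, Complex.mul_re, Complex.mul_im] at this
    linarith [this]
  have hy2 : y^2 = 3*x^2 - 2*x - 1 := by
    have h : y * (3*x^2 - y^2 - 2*x - 1) = 0 := by ring_nf; ring_nf at him; linarith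
    rcases mul_eq_zero.mp h with h | h
    · exact absurd h hαim
    · linarith
  have hx : 4*x^3 - 4*x^2 + 1 = 0 := by linear_combination (-1/2)*hre + ((1-3*x)/2)*hy2
  have hy2pos : 0 < y^2 := by positivity
  have hxlt : x < -1/3 := by
    nlinarith [sq_nonneg x, sq_nonneg (x-1), sq_nonneg (x+1), mul_self_nonneg (x*(x-1))]
  have hxgt : -1/2 < x := by nlinarith [sq_nonneg x, sq_nonneg (2*x+1)]
  -- setup from root of unity hypothesis
  have habsne : (‖α‖ : ℂ) ≠ 0 :=
    Complex.ofReal_ne_zero.mpr (norm_ne_zero_iff.mpr hαne)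
  have habs : α^n = ((‖α‖ ^ n : ℝ) : ℂ) := by
    rw [div_pow, div_eq_one_iff_eq (pow_ne_zero n habsne)] at hroot
    rw [hroot]; push_cast; ring
  have h3 : α^3 = α^2 + α + 1 := by linear_combination hα
  have heq : α^n = ((tseq n).1 : ℂ)*α^2 + ((tseq n).2.1 : ℂ)*α + ((tseq n).2.2 : ℂ) :=
    pow_rep α h3 n
  set a := (tseq n).1 with ha'
  set b := (tseq n).2.1 with hb'
  set c := (tseq n).2.2 with hc'
  have hIm : (a:ℝ)*(2*x*y) + (b:ℝ)*y = 0 := by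
    have h1 := congrArg Complex.im heq
    rw [habs] at h1
    simp [pow_two, Complex.mul_im, Complex.mul_re, ← Complex.ofReal_pow] at h1
    ring_nf at h1 ⊢
    linarith
  have hRe : ((a:ℝ)*(x^2 - y^2) + (b:ℝ)*x + c) = ‖α‖ ^ n := by
    have h1 := congrArg Complex.re heq
    rw [habs] at h1
    simp [pow_two, Complex.mul_im, Complex.mul_re, ← Complex.ofReal_pow] at h1
    ring_nf at h1 ⊢
    linarith
  have hab : 2*(a:ℝ)*x + (b:ℝ) = 0 := by
    have h : y * (2*(a:ℝ)*x + b) = 0 := by linear_combination hIm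
    rcases mul_eq_zero.mp h with h | h
    · exact absurd h hαim
    · exact h
  -- |α| < 1
  have habs2 : (‖α‖)^2 = x^2 + y^2 := by
    rw [Complex.sq_norm, Complex.normSq_apply]; ring
  have habslt : ‖α‖ < 1 := by
    nlinarith [norm_nonneg α, habs2, hy2, hxgt, hxlt]
  have habspos : 0 < ‖α‖ := norm_pos_iff.mpr hαne
  have hpowlt : ‖α‖ ^ n < 1 := pow_lt_one₀ habspos.le habslt hn.ne'
  have hpowpos : 0 < ‖α‖ ^ n := pow_pos habspos n
  by_cases ha : a = 0
  · have hbR : (b:ℝ) = 0 := by rw [ha] at hab; push_cast at hab; linarith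
    have hb : b = 0 := by exact_mod_cast hbR
    rw [ha, hb] at hRe
    push_cast at hRe
    have hc1 : (0:ℝ) < (c:ℝ) := by linarith
    have hc2 : (c:ℝ) < 1 := by linarith
    have : (0:ℤ) < c := by exact_mod_cast hc1
    have : c < 1 := by exact_mod_cast hc2
    omega
  · have haR : (a:ℝ) ≠ 0 := Int.cast_ne_zero.mpr ha
    have haQ : (a:ℚ) ≠ 0 := Int.cast_ne_zero.mpr ha
    set r : ℚ := -(b:ℚ)/(a:ℚ) with hr'
    have hrR : (r:ℝ) = 2*x := by
      rw [hr']
      push_cast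
      field_simp
      linarith
    have hrq : r^3 - 2*r^2 + 2 = 0 := by
      have hR : (r:ℝ)^3 - 2*(r:ℝ)^2 + 2 = 0 := by
        rw [hrR]; linear_combination 2*hx
      exact_mod_cast hR
    have h1 : -1 < r := by
      have : (-1:ℝ) < (r:ℝ) := by rw [hrR]; linarith
      exact_mod_cast this
    have h2 : r < -2/3 := by
      have : (r:ℝ) < -2/3 := by rw [hrR]; linarith
      exact_mod_cast this
    exact no_rat r hrq h1 h2
end

section
/- arg(α) and 2π are linearly independent over the rationals, where α is a non-real root of X^3 − X^2 − X − 1. -/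
lemma no_rat_root (t : ℚ) (h : t^3 = t^2 + t + 1) (h1 : 5/3 < t) (h2 : t < 2) : False := by
  have hden : (t.den : ℚ) ≠ 0 := by exact_mod_cast t.den_ne_zero
  have hnum : (t.num : ℚ) = t * t.den := by rw [Rat.mul_den_eq_num]
  have key : (t.num : ℚ)^3 = t.num^2 * t.den + t.num * t.den^2 + t.den^3 := by
    rw [hnum]; ring_nf; nlinarith [h, sq_nonneg (t.den:ℚ), pow_pos (show (0:ℚ) < t.den by positivity) 3]
  have keyZ : t.num ^ 3 = t.num^2 * t.den + t.num * t.den^2 + t.den^3 := by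
    exact_mod_cast key
  have hd : (t.den : ℤ) ∣ t.num ^ 3 :=
    ⟨t.num^2 + t.num * t.den + t.den^2, by linarith [keyZ]⟩
  have hcop : IsCoprime (t.den : ℤ) t.num := by
    rw [Int.isCoprime_iff_gcd_eq_one, Int.gcd_comm]
    exact t.reduced
  have hcop3 : IsCoprime (t.den : ℤ) (t.num ^ 3) := hcop.pow_right
  have hunit : IsUnit (t.den : ℤ) := hcop3.isUnit_of_dvd' dvd_rfl hd
  have hone : t.den = 1 := by
    have := Int.isUnit_iff.mp hunit
    omega
  have : t = t.num := by rw [← Rat.num_div_den t, hone]; simp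
  rw [this] at h1 h2
  have : t.num < 2 := by exact_mod_cast h2
  have : (5:ℚ)/3 < t.num := h1
  have : (1:ℚ) ≥ t.num := by exact_mod_cast (by omega : t.num ≤ 1)
  linarith

lemma rep (α : ℂ) (β : ℝ) (hα : α^3 = α^2 + α + 1) (hβ : β^3 = β^2 + β + 1) :
    ∀ n : ℕ, ∃ a b c : ℚ, α^n = a*α^2 + b*α + c ∧ β^n = a*β^2 + b*β + c := by
  intro n
  induction n with
  | zero => exact ⟨0, 0, 1, by push_cast; ring, by push_cast; ring⟩
  | succ n ih =>
    obtain ⟨a, b, c, h1, h2⟩ := ih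
    refine ⟨a + b, a + c, a, ?_, ?_⟩
    · rw [pow_succ, h1]; push_cast; linear_combination (a:ℂ) * hα
    · rw [pow_succ, h2]; push_cast; linear_combination (a:ℝ) * hβ

open Complex Real in
lemma pow_real (α : ℂ) (n : ℕ) (m : ℤ) (harg : (n:ℝ) * Complex.arg α = (m:ℝ) * (2*Real.pi)) :
    (α^n).im = 0 := by
  have h := Complex.norm_mul_exp_arg_mul_I α
  rw [← h, mul_pow, ← Complex.exp_nat_mul]
  have : (n:ℂ) * (↑(Complex.arg α) * I) = (m:ℂ) * (2*(Real.pi:ℂ)*I) := by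
    rw [← mul_assoc, ← mul_assoc]
    congr 1
    norm_cast
  rw [this, Complex.exp_int_mul_two_pi_mul_I, mul_one]
  norm_cast

theorem arg_lin_indep (α : ℂ)
    (hα : α^3 - α^2 - α - 1 = 0) (hαim : α.im ≠ 0) :
    ∀ q r : ℚ, (q : ℝ) * Complex.arg α + (r : ℝ) * (2 * Real.pi) = 0 →
      q = 0 ∧ r = 0 := by
  intro q r hqr
  by_cases hq : q = 0
  · subst hq
    refine ⟨rfl, ?_⟩
    simp only [Rat.cast_zero, zero_mul, zero_add] at hqr
    have h2π : (2 * Real.pi) ≠ 0 := by positivity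
    have : (r:ℝ) = 0 := by
      rcases mul_eq_zero.mp hqr with h | h
      · exact h
      · exact absurd h h2π
    exact_mod_cast this
  · exfalso
    set u := α.re with hu
    set v := α.im with hv
    -- real and imaginary parts of the cubic equation
    have h2 : α*α*α - α*α - α - 1 = 0 := by linear_combination hα
    rw [Complex.ext_iff] at h2
    simp [Complex.mul_re, Complex.mul_im] at h2
    obtain ⟨hre, him⟩ := h2
    have hE1 : v^2 = 3*u^2 - 2*u - 1 := by
      have hfac : v * (3*u^2 - v^2 - 2*u - 1) = 0 := by linear_combination him
      rcases mul_eq_zero.mp hfac with h | h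
      · exact absurd h hαim
      · linarith
    have hE2 : 4*u^3 - 4*u^2 + 1 = 0 := by
      linear_combination (-(1/2:ℝ))*hre + (-(1/2:ℝ))*(3*u-1)*hE1
    have hvpos : 0 < v^2 := by positivity
    have hu2 : u < -1/3 := by nlinarith [hE2, hE1, hvpos]
    have hu1 : -1/2 < u := by nlinarith [hE2]
    -- the real root
    set β : ℝ := 1 - 2*u with hβ
    have hβcube : β^3 = β^2 + β + 1 := by rw [hβ]; linear_combination (-2:ℝ)*hE2
    have hβlb : 5/3 < β := by rw [hβ]; linarith
    have hβub : β < 2 := by rw [hβ]; linarith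
    -- |α| < 1
    have habs2 : (‖α‖)^2 = u^2 + v^2 := by
      rw [Complex.sq_norm, Complex.normSq_apply]; ring
    have habs : ‖α‖ < 1 := by
      nlinarith [norm_nonneg α, habs2, hE1, hu1, hu2]
    -- α^n is real for n = denominator of -r/q
    have hq' : (q:ℝ) ≠ 0 := by exact_mod_cast hq
    set s : ℚ := -r/q with hs
    have hargeq : Complex.arg α = (s:ℝ) * (2*Real.pi) := by
      rw [hs]; push_cast; field_simp; linarith [hqr]
    set n : ℕ := s.den with hn
    have hn0 : n ≠ 0 := s.den_ne_zero
    have hns : s * (n:ℚ) = s.num := by exact_mod_cast Rat.mul_den_eq_num s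
    have harg : (n:ℝ) * Complex.arg α = (s.num:ℝ) * (2*Real.pi) := by
      rw [hargeq]
      have : ((s * n : ℚ) : ℝ) = ((s.num : ℚ) : ℝ) := by rw [hns]
      push_cast at this
      linear_combination (2*Real.pi) * this
    have him0 : (α^n).im = 0 := pow_real α n s.num harg
    -- use representation
    have h0 : α^3 = α^2 + α + 1 := by linear_combination hα
    obtain ⟨a, b, c, hrep1, hrep2⟩ := rep α β h0 hβcube n
    rw [hrep1] at him0
    simp [Complex.mul_im, Complex.mul_re, pow_two] at him0
    -- him0 should now say : a * (2uv) + b*v = 0 (in some form)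
    have hkey : v * (2*u*(a:ℝ) + b) = 0 := by linear_combination him0
    have hkey2 : 2*u*(a:ℝ) + b = 0 := by
      rcases mul_eq_zero.mp hkey with h | h
      · exact absurd h hαim
      · exact h
    by_cases ha : a = 0
    · have hb : (b:ℝ) = 0 := by rw [ha] at hkey2; push_cast at hkey2; linarith
      have hb' : b = 0 := by exact_mod_cast hb
      rw [ha, hb'] at hrep1 hrep2
      push_cast at hrep1 hrep2
      simp at hrep1 hrep2
      -- hrep1 : α^n = (c:ℂ), hrep2 : β^n = (c:ℝ)
      have hc1 : (1:ℝ) < c := by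
        rw [← hrep2]
        exact one_lt_pow₀ (by linarith) hn0
      have hlt : ‖α^n‖ < 1 := by
        rw [norm_pow]
        exact pow_lt_one₀ (norm_nonneg α) habs hn0
      rw [hrep1] at hlt
      rw [show ((c:ℚ):ℂ) = ((c:ℝ):ℂ) by push_cast; rfl, Complex.norm_real, Real.norm_eq_abs] at hlt
      have : (1:ℝ) < |(c:ℝ)| := lt_of_lt_of_le hc1 (le_abs_self _)
      linarith
    · -- β is rational: β = (a+b)/a
      have ha' : (a:ℝ) ≠ 0 := by exact_mod_cast ha
      set t : ℚ := (a + b)/a with ht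
      have htβ : (t:ℝ) = β := by
        rw [ht, hβ]; push_cast; field_simp; linarith [hkey2]
      apply no_rat_root t
      · have : (t:ℝ)^3 = (t:ℝ)^2 + t + 1 := by rw [htβ]; exact hβcube
        exact_mod_cast this
      · have h5 : ((5/3 : ℚ) : ℝ) < t := by rw [htβ]; push_cast; linarith [hβlb]
        exact_mod_cast h5
      · have : (t:ℝ) < 2 := by rw [htβ]; exact hβub
        exact_mod_cast this
end

section
/- Setting c(n) = ⌊ψ(n+1)⌋ − ⌊ψn⌋: for every d ≥ 1 there exist infinitely many m such that c(T_m) ≠ c(T_{m+d}). -/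
noncomputable def eps (ψ : ℝ) (n : ℕ) : ℝ := ψ * trib n - trib (n + 1)

noncomputable def stp (p q : ℝ) : ℕ → ℝ × ℝ
  | 0 => (1, 0)
  | d + 1 => (-q * (stp p q d).2, (stp p q d).1 + p * (stp p q d).2)

lemma psi_bounds {ψ : ℝ} (hψ : ψ^3 - ψ^2 - ψ - 1 = 0) : 1.8 < ψ ∧ ψ < 1.85 := by
  constructor
  · by_contra h
    push_neg at h
    nlinarith [sq_nonneg (ψ + 0.4), sq_nonneg ψ]
  · by_contra h
    push_neg at h
    nlinarith [sq_nonneg (ψ + 0.425), sq_nonneg ψ]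

lemma trib_pos : ∀ n, 0 < trib (n + 1) := by
  have key : ∀ n, 0 < trib (n + 1) ∧ 0 < trib (n + 2) := by
    intro n
    induction n with
    | zero => exact ⟨by norm_num [trib], by norm_num [trib]⟩
    | succ k ih =>
      refine ⟨ih.2, ?_⟩
      show 0 < trib (k + 3)
      rw [trib]
      have := ih.1
      omega
  exact fun n => (key n).1

lemma eps_rec {ψ : ℝ} (hψ : ψ^3 - ψ^2 - ψ - 1 = 0) (n : ℕ) :
    eps ψ (n + 2) = (1 - ψ) * eps ψ (n + 1) - (ψ^2 - ψ - 1) * eps ψ n := by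
  have h3 : trib (n + 3) = trib (n + 2) + trib (n + 1) + trib n := rfl
  unfold eps
  rw [h3]
  push_cast
  linear_combination (trib n : ℝ) * hψ

lemma psi_irrational {ψ : ℝ} (hψ : ψ^3 - ψ^2 - ψ - 1 = 0) (a b : ℤ)
    (hb : (b : ℝ) ≠ 0) (h : ψ * b = a) : False := by
  have hbQ : (b : ℚ) ≠ 0 := by
    intro h0
    apply hb
    exact_mod_cast congrArg (Rat.cast (K := ℝ)) h0
  set r : ℚ := (a : ℚ) / (b : ℚ) with hr
  have hrψ : (r : ℝ) = ψ := by
    rw [hr]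
    push_cast
    field_simp
    linarith [h]
  have hQ : r ^ 3 - r ^ 2 - r - 1 = 0 := by
    have : ((r ^ 3 - r ^ 2 - r - 1 : ℚ) : ℝ) = 0 := by push_cast [hrψ]; linarith [hψ]
    exact_mod_cast this
  set n : ℤ := r.num with hn
  set d : ℤ := (r.den : ℤ) with hd
  have hd0 : 0 < d := by rw [hd]; exact_mod_cast r.pos
  have hnd : (n : ℚ) / (d : ℚ) = r := by exact_mod_cast Rat.num_div_den r
  have hdQ : (d : ℚ) ≠ 0 := by positivity
  have hint : n ^ 3 = n ^ 2 * d + n * d ^ 2 + d ^ 3 := by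
    have : ((n : ℚ) / d) ^ 3 - ((n : ℚ)/d) ^ 2 - ((n:ℚ)/d) - 1 = 0 := by rw [hnd]; exact hQ
    field_simp at this
    have h2 : (((n ^ 3 - n ^ 2 * d - n * d ^ 2 - d ^ 3 : ℤ)) : ℚ) * (d:ℚ)^3 = 0 := by
      push_cast
      linear_combination (d:ℚ)^3 * this
    have h3 : ((n ^ 3 - n ^ 2 * d - n * d ^ 2 - d ^ 3 : ℤ) : ℚ) = 0 := by
      rcases mul_eq_zero.mp h2 with h | h
      · exact h
      · exact absurd h (by positivity)
    have h4 : (n ^ 3 - n ^ 2 * d - n * d ^ 2 - d ^ 3 : ℤ) = 0 := by exact_mod_cast h3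
    linarith
  have hdvd : d ∣ n ^ 3 := ⟨n ^ 2 + n * d + d ^ 2, by linear_combination hint⟩
  have hcop : IsCoprime n d := by
    rw [Int.isCoprime_iff_gcd_eq_one]
    exact_mod_cast r.reduced
  have hunit : IsUnit d := (IsCoprime.pow_left (m := 3) hcop).isUnit_of_dvd' hdvd dvd_rfl
  have hd1 : d = 1 := by
    rcases Int.isUnit_iff.mp hunit with h1 | h1 <;> omega
  rw [hd1] at hint
  have hn1 : n ∣ 1 := ⟨n ^ 2 - n - 1, by linear_combination -hint⟩
  have := Int.isUnit_iff.mp (isUnit_of_dvd_one hn1)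
  rcases this with h1 | h1 <;> rw [h1] at hint <;> norm_num at hint

lemma stp_shift {p q : ℝ} {E : ℕ → ℝ}
    (hrec : ∀ n, E (n + 2) = p * E (n + 1) - q * E n) :
    ∀ d n, E (n + d) = (stp p q d).1 * E n + (stp p q d).2 * E (n + 1) := by
  intro d
  induction d with
  | zero => intro n; simp [stp]
  | succ k ih =>
    intro n
    have h1 : n + (k + 1) = (n + 1) + k := by omega
    rw [h1, ih (n + 1), hrec n]
    simp only [stp]
    ring

lemma stp_norm {p q : ℝ} : ∀ d, (stp p q d).1 ^ 2 + p * (stp p q d).1 * (stp p q d).2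
    + q * (stp p q d).2 ^ 2 = q ^ d := by
  intro d
  induction d with
  | zero => simp [stp]
  | succ k ih =>
    simp only [stp, pow_succ]
    linear_combination q * ih

lemma qform_decay {p q : ℝ} {E : ℕ → ℝ}
    (hrec : ∀ n, E (n + 2) = p * E (n + 1) - q * E n) :
    ∀ n, E (n+1) ^ 2 - p * E (n+1) * E n + q * E n ^ 2
      = q ^ n * (E 1 ^ 2 - p * E 1 * E 0 + q * E 0 ^ 2) := by
  intro n
  induction n with
  | zero => simp
  | succ k ih =>
    rw [hrec k, pow_succ]
    linear_combination q * ih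

lemma eps_small {p q : ℝ} {E : ℕ → ℝ} (hq0 : 0 < q) (hq1 : q < 1) (hpq : p ^ 2 < 4 * q)
    (hrec : ∀ n, E (n + 2) = p * E (n + 1) - q * E n) (δ : ℝ) (hδ : 0 < δ) :
    ∃ N, ∀ n, N ≤ n → |E n| < δ := by
  set C := E 1 ^ 2 - p * E 1 * E 0 + q * E 0 ^ 2 with hC
  have hc0 : 0 < q - p ^ 2 / 4 := by nlinarith
  have hCnn : 0 ≤ C := by nlinarith [sq_nonneg (E 1 - p * E 0 / 2), sq_nonneg (E 0)]
  have hub : ∀ n, (q - p ^ 2 / 4) * E n ^ 2 ≤ q ^ n * C := by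
    intro n
    have h := qform_decay hrec n
    nlinarith [sq_nonneg (E (n+1) - p * E n / 2)]
  obtain ⟨N, hN⟩ := exists_pow_lt_of_lt_one
    (show 0 < (q - p^2/4) * δ^2 / (C + 1) by positivity) hq1
  refine ⟨N, fun n hn => ?_⟩
  have hqn : q ^ n ≤ q ^ N := pow_le_pow_of_le_one (le_of_lt hq0) (le_of_lt hq1) hn
  have h3 : q ^ N * (C + 1) < (q - p ^ 2 / 4) * δ ^ 2 :=
    (lt_div_iff₀ (by positivity)).mp hN
  have h2 : E n ^ 2 < δ ^ 2 := by
    nlinarith [hub n, pow_nonneg (le_of_lt hq0) n, pow_nonneg (le_of_lt hq0) N]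
  nlinarith [sq_abs (E n), abs_nonneg (E n), sq_nonneg (|E n| - δ)]

lemma no_pos_sol {P Q : ℝ} (hQ : 0 < Q) (hPQ : P ^ 2 < 4 * Q) (η : ℕ → ℝ)
    (hpos : ∀ k, 0 < η k) (hrec : ∀ k, η (k + 2) = P * η (k + 1) - Q * η k) : False := by
  have hP : 0 < P := by
    by_contra hP
    push_neg at hP
    have h2 := hrec 0
    nlinarith [hpos 0, hpos 1, hpos 2]
  set t : ℕ → ℝ := fun k => η (k + 1) / η k with ht
  have htpos : ∀ k, 0 < t k := fun k => div_pos (hpos (k + 1)) (hpos k)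
  have htrec : ∀ k, t (k + 1) = P - Q / t k := by
    intro k
    have h2 := (hpos k).ne'
    have h3 := (hpos (k + 1)).ne'
    show η (k + 1 + 1) / η (k + 1) = P - Q / (η (k + 1) / η k)
    rw [show k + 1 + 1 = k + 2 from rfl, hrec k]
    field_simp
  have htlt : ∀ k, t (k + 1) < P := by
    intro k
    rw [htrec k]
    have := div_pos hQ (htpos k)
    linarith
  set D := Q - P ^ 2 / 4 with hD
  have hD0 : 0 < D := by rw [hD]; nlinarith
  have hDP : 0 < D / P := div_pos hD0 hP
  have hdec : ∀ k, 1 ≤ k → t (k + 1) ≤ t k - D / P := by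
    intro k hk
    obtain ⟨j, rfl⟩ := Nat.exists_eq_add_of_le hk
    have h1 : t (1 + j) < P := by
      have := htlt j
      rwa [Nat.add_comm 1 j]
    have h2 := htpos (1 + j)
    rw [htrec (1 + j)]
    nlinarith [sq_nonneg (t (1 + j) - P / 2), div_mul_cancel₀ Q h2.ne',
      div_mul_cancel₀ D hP.ne', mul_le_mul_of_nonneg_left h1.le hDP.le, h2]
  have hiter : ∀ j : ℕ, t (1 + j) ≤ t 1 - j * (D / P) := by
    intro j
    induction j with
    | zero => simp
    | succ i ih =>
      have := hdec (1 + i) (by omega)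
      have heq : 1 + (i + 1) = (1 + i) + 1 := by omega
      rw [heq]
      push_cast
      linarith
  obtain ⟨j, hj⟩ := exists_nat_gt (t 1 / (D / P))
  have : t 1 - j * (D / P) < 0 := by
    rw [div_lt_iff₀ hDP] at hj
    nlinarith
  linarith [htpos (1 + j), hiter j]

lemma c_eval {ψ : ℝ} (h18 : 1.8 < ψ) (h185 : ψ < 1.85) (n : ℕ)
    (h1 : |eps ψ n| < 0.1) (h2 : eps ψ n ≠ 0) :
    ⌊ψ * ((trib n : ℝ) + 1)⌋ - ⌊ψ * (trib n : ℝ)⌋ = if 0 < eps ψ n then 1 else 2 := by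
  have hE : ψ * (trib n : ℝ) = (trib (n + 1) : ℝ) + eps ψ n := by unfold eps; ring
  rw [abs_lt] at h1
  by_cases hpos : 0 < eps ψ n
  · rw [if_pos hpos]
    have hf1 : ⌊ψ * (trib n : ℝ)⌋ = (trib (n + 1) : ℤ) := by
      rw [Int.floor_eq_iff, hE]
      constructor
      · push_cast; linarith
      · push_cast; linarith
    have hf2 : ⌊ψ * ((trib n : ℝ) + 1)⌋ = (trib (n + 1) : ℤ) + 1 := by
      rw [Int.floor_eq_iff]
      have : ψ * ((trib n : ℝ) + 1) = (trib (n + 1) : ℝ) + eps ψ n + ψ := by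
        rw [mul_add, hE]; ring
      rw [this]
      constructor
      · push_cast; linarith
      · push_cast; linarith
    rw [hf1, hf2]; ring
  · rw [if_neg hpos]
    push_neg at hpos
    have hneg : eps ψ n < 0 := lt_of_le_of_ne hpos h2
    have hf1 : ⌊ψ * (trib n : ℝ)⌋ = (trib (n + 1) : ℤ) - 1 := by
      rw [Int.floor_eq_iff, hE]
      constructor
      · push_cast; linarith
      · push_cast; linarith
    have hf2 : ⌊ψ * ((trib n : ℝ) + 1)⌋ = (trib (n + 1) : ℤ) + 1 := by
      rw [Int.floor_eq_iff]
      have : ψ * ((trib n : ℝ) + 1) = (trib (n + 1) : ℝ) + eps ψ n + ψ := by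
        rw [mul_add, hE]; ring
      rw [this]
      constructor
      · push_cast; linarith
      · push_cast; linarith
    rw [hf1, hf2]; ring

theorem c_trib_infinitely_often_ne (ψ : ℝ)
    (hψ : ψ^3 - ψ^2 - ψ - 1 = 0) :
    ∀ d : ℕ, 1 ≤ d →
      {m : ℕ | ⌊ψ * ((trib m : ℝ) + 1)⌋ - ⌊ψ * (trib m : ℝ)⌋ ≠
        ⌊ψ * ((trib (m + d) : ℝ) + 1)⌋ - ⌊ψ * (trib (m + d) : ℝ)⌋}.Infinite := by
  intro d hd
  by_contra hfin
  rw [Set.not_infinite] at hfin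
  obtain ⟨M, hM⟩ := hfin.bddAbove
  obtain ⟨h18, h185⟩ := psi_bounds hψ
  set p : ℝ := 1 - ψ with hp
  set q : ℝ := ψ ^ 2 - ψ - 1 with hqdef
  have hq0 : 0 < q := by rw [hqdef]; nlinarith
  have hq1 : q < 1 := by rw [hqdef]; nlinarith
  have hpq : p ^ 2 < 4 * q := by rw [hp, hqdef]; nlinarith
  have hrec : ∀ n, eps ψ (n + 2) = p * eps ψ (n + 1) - q * eps ψ n := eps_rec hψ
  have hne : ∀ n, eps ψ n ≠ 0 := by
    intro n hzero
    rcases n with _ | m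
    · norm_num [eps, trib] at hzero
    · have hpos := trib_pos m
      apply psi_irrational hψ (trib (m + 2) : ℤ) (trib (m + 1) : ℤ)
      · have : (0:ℝ) < ((trib (m + 1) : ℤ) : ℝ) := by exact_mod_cast hpos
        linarith
      · unfold eps at hzero
        push_cast
        push_cast at hzero
        linarith
  obtain ⟨N0, hN0⟩ := eps_small hq0 hq1 hpq hrec 0.1 (by norm_num)
  set N := max (M + 1) N0 with hN
  have hsign : ∀ m, N ≤ m → (0 < eps ψ m ↔ 0 < eps ψ (m + d)) := by
    intro m hm
    have hM1 : M + 1 ≤ m := le_trans (le_max_left _ _) hm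
    have hN0m : N0 ≤ m := le_trans (le_max_right _ _) hm
    have hmS : m ∉ {m : ℕ | ⌊ψ * ((trib m : ℝ) + 1)⌋ - ⌊ψ * (trib m : ℝ)⌋ ≠
        ⌊ψ * ((trib (m + d) : ℝ) + 1)⌋ - ⌊ψ * (trib (m + d) : ℝ)⌋} := by
      intro hmem
      have := hM hmem
      omega
    simp only [Set.mem_setOf_eq, not_not] at hmS
    have e1 := c_eval h18 h185 m (hN0 m hN0m) (hne m)
    have e2 := c_eval h18 h185 (m + d) (hN0 (m + d) (by omega)) (hne (m + d))
    rw [e1, e2] at hmS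
    by_cases ha : 0 < eps ψ m <;> by_cases hb : 0 < eps ψ (m + d) <;>
      simp [ha, hb] at hmS ⊢ <;> tauto
  have hshift := stp_shift hrec
  have hnorm := stp_norm (p := p) (q := q) d
  set s : ℝ := (stp p q d).1 with hs
  set t : ℝ := (stp p q d).2 with hts
  by_cases ht : t = 0
  · -- proportional branch: leads to ψ rational
    have he0 : eps ψ 0 = -1 := by norm_num [eps, trib]
    have he1 : eps ψ 1 = ψ - 1 := by norm_num [eps, trib]
    have h1 := hshift d 0
    have h2 := hshift d 1
    rw [← hs, ← hts] at h1 h2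
    rw [Nat.zero_add] at h1
    rw [ht] at h1 h2
    have key : eps ψ (1 + d) + (ψ - 1) * eps ψ d = 0 := by
      linear_combination h2 + (ψ - 1) * h1 + s * he1 + (ψ - 1) * s * he0
    have hd1 : 1 + d = d + 1 := by omega
    rw [hd1] at key
    unfold eps at key
    have htrib2 : ((trib (d + 1 + 1) : ℝ)) = (trib (d + 2) : ℝ) := by norm_num
    rw [htrib2] at key
    have hmain : ψ * ((trib (d + 2) : ℝ) - (trib (d + 1) : ℝ) - (trib d : ℝ))
        = (trib d : ℝ) := by
      linear_combination (trib d : ℝ) * hψ - ψ * key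
    set Bz : ℤ := (trib (d + 2) : ℤ) - trib (d + 1) - trib d with hBz
    by_cases hB0 : Bz = 0
    · have : ((trib (d + 2) : ℝ) - (trib (d + 1) : ℝ) - (trib d : ℝ)) = 0 := by
        have : ((Bz : ℝ)) = 0 := by rw [hB0]; norm_num
        push_cast [hBz] at this
        linarith
      rw [this, mul_zero] at hmain
      obtain ⟨m, rfl⟩ := Nat.exists_eq_add_of_le hd
      have := trib_pos m
      have : (0:ℝ) < (trib (1 + m) : ℝ) := by
        rw [Nat.add_comm 1 m]
        exact_mod_cast this
      linarith
    · apply psi_irrational hψ (trib d : ℤ) Bz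
      · intro h0
        apply hB0
        exact_mod_cast h0
      · push_cast [hBz]
        push_cast at hmain
        linarith
  · -- non-proportional branch
    have hQd : 0 < q ^ d := pow_pos hq0 d
    set P : ℝ := 2 * s + p * t with hPdef
    have ht2 : 0 < t ^ 2 := by positivity
    have hPQ : P ^ 2 < 4 * q ^ d := by
      rw [hPdef]
      nlinarith [hnorm, ht2, hpq]
    have hdec2 : ∀ n, eps ψ (n + 2 * d) = P * eps ψ (n + d) - q ^ d * eps ψ n := by
      intro n
      have h1 := hshift d n
      have h2 := hshift d (n + 1)
      have h3 := hshift d (n + d)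
      have h4 := hrec n
      rw [show n + 1 + d = n + d + 1 from by omega,
          show n + 1 + 1 = n + 2 from by omega] at h2
      rw [← hs, ← hts] at h1 h2 h3
      rw [show n + 2 * d = n + d + d from by omega, h3, h2, h4, h1]
      rw [hPdef]
      linear_combination -(eps ψ n) * hnorm
    rcases (hne N).lt_or_gt with hNneg | hNpos
    · -- eps N < 0 : take η k = - eps (N + k d)
      refine no_pos_sol hQd hPQ (fun k => - eps ψ (N + k * d)) ?_ ?_
      · intro k
        induction k with
        | zero => simpa using hNneg
        | succ i ih =>
          have ih' : 0 < -eps ψ (N + i * d) := ih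
          have hge : N ≤ N + i * d := by omega
          have hiff := hsign (N + i * d) hge
          have hne2 := hne (N + i * d + d)
          have hnotpos : ¬ (0 < eps ψ (N + i * d + d)) := by
            intro hc
            have := hiff.mpr hc
            linarith
          show 0 < -eps ψ (N + (i + 1) * d)
          have heq : N + (i + 1) * d = N + i * d + d := by ring
          rw [heq]
          simp only [neg_pos]
          rcases hne2.lt_or_gt with h | h
          · exact h
          · exact absurd h hnotpos
      · intro k
        have := hdec2 (N + k * d)
        rw [show N + k * d + 2 * d = N + (k + 2) * d from by ring,
            show N + k * d + d = N + (k + 1) * d from by ring] at this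
        show -eps ψ (N + (k + 2) * d) = P * -eps ψ (N + (k + 1) * d) - q ^ d * -eps ψ (N + k * d)
        rw [this]
        ring
    · -- eps N > 0 : take η k = eps (N + k d)
      refine no_pos_sol hQd hPQ (fun k => eps ψ (N + k * d)) ?_ ?_
      · intro k
        induction k with
        | zero => simpa using hNpos
        | succ i ih =>
          have ih' : 0 < eps ψ (N + i * d) := ih
          have hge : N ≤ N + i * d := by omega
          have hiff := hsign (N + i * d) hge
          show 0 < eps ψ (N + (i + 1) * d)
          have heq : N + (i + 1) * d = N + i * d + d := by ring
          rw [heq]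
          exact hiff.mp ih'
      · intro k
        have := hdec2 (N + k * d)
        rw [show N + k * d + 2 * d = N + (k + 2) * d from by ring,
            show N + k * d + d = N + (k + 1) * d from by ring] at this
        show eps ψ (N + (k + 2) * d) = P * eps ψ (N + (k + 1) * d) - q ^ d * eps ψ (N + k * d)
        rw [this]
end
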